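/- Let A₁,…,A_n be d×d real matrices, let m > 0, 0 < h ≤ m, σ_h ∈ ℝ, and let ‖·‖₁,…,‖·‖_n be norms on ℝ^d forming an extremal multinorm datum for the h-discretization with value σ_h. Set c = max_{j=1,…,n} ‖(A_j − σ_h I)²‖_j (operator norms induced by the respective ‖·‖_j), assume c·h² < 8, and assume moreover that e^{σ_h m} ≤ 1 − c h²/8. Then every trajectory x of the switched system for {A₁,…,A_n} with dwell time at least m is bounded: sup_{t ≥ 0} ‖x(t)‖ < ∞ for any norm ‖·‖ on ℝ^d. -/

import Mathlib

/-!
On each mode write `A = σ I + B`. The extremal-norm bound `‖e^{hA}‖ ≤ e^{σh}` gives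
`‖e^{hB}‖ ≤ 1`, and the linear-interpolation error estimate on `[0, h]` for `τ ↦ e^{τB}`, whose
second derivative is `B² e^{τB}`, gives `K ≤ 1 + c K h² / 8` for `K = max_{[0, h]} ‖e^{τB}‖`.
Hence `‖e^{τA}‖ ≤ (1 - c h² / 8)⁻¹` on `[0, h]`, and then for every `τ ≥ 0` because `σ ≤ 0`.
A dwell interval of length `Δ ≥ m` in mode `j`, entered with the state measured in the norm of
the previous mode `i`, therefore ends with `‖x‖_j ≤ (1 - c h² / 8)⁻¹ e^{σm} ‖x‖_i ≤ ‖x‖_i`: the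
norm of the current mode does not increase from one switch to the next, and inside an interval
it grows by at most the factor `(1 - c h² / 8)⁻¹`. Equivalence of norms on `ℝ^d` turns this into
a bound in any norm.
-/

/-- `N` is a norm on `ℝ^d`: subadditive, absolutely homogeneous, and definite. -/
def IsNorm {d : ℕ} (N : (Fin d → ℝ) → ℝ) : Prop :=
  (∀ x y, N (x + y) ≤ N x + N y) ∧
  (∀ (c : ℝ) (x), N (c • x) = |c| * N x) ∧
  (∀ x, N x = 0 → x = 0)

/-- The operator norm of the matrix `M`, induced by the norm `N` on `ℝ^d`:
`sup { N (M x) : N x ≤ 1 }`. -/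
noncomputable def opNorm {d : ℕ} (N : (Fin d → ℝ) → ℝ) (M : Matrix (Fin d) (Fin d) ℝ) : ℝ :=
  sSup {r : ℝ | ∃ x, N x ≤ 1 ∧ r = N (M.mulVec x)}

/-- `x : ℝ → ℝ^d` is a trajectory of the switched system for the matrices `A j` with dwell
time at least `m`: there are switching times `0 = t 0 < t 1 < ⋯` (a finite or infinite
strictly increasing sequence, consecutive gaps at least `m`, tending to `∞` if infinite,
the last interval being `[t N, ∞)` if finite) and modes `j 0, j 1, …` with
`j (k+1) ≠ j k`, such that on each switching interval
`x s = e^{(s − t k) A (j k)} (x (t k))`. -/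
def IsDwellTrajectory {d n : ℕ} (A : Fin n → Matrix (Fin d) (Fin d) ℝ) (m : ℝ)
    (x : ℝ → (Fin d → ℝ)) : Prop :=
  (∃ (N : ℕ) (t : ℕ → ℝ) (j : ℕ → Fin n),
    t 0 = 0 ∧
    (∀ k < N, m ≤ t (k + 1) - t k) ∧
    (∀ k < N, j (k + 1) ≠ j k) ∧
    (∀ k < N, ∀ s ∈ Set.Icc (t k) (t (k + 1)),
      x s = (NormedSpace.exp ((s - t k) • A (j k))).mulVec (x (t k))) ∧
    (∀ s : ℝ, t N ≤ s →
      x s = (NormedSpace.exp ((s - t N) • A (j N))).mulVec (x (t N)))) ∨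
  (∃ (t : ℕ → ℝ) (j : ℕ → Fin n),
    t 0 = 0 ∧
    (∀ k : ℕ, m ≤ t (k + 1) - t k) ∧
    Filter.Tendsto t Filter.atTop Filter.atTop ∧
    (∀ k : ℕ, j (k + 1) ≠ j k) ∧
    (∀ k : ℕ, ∀ s ∈ Set.Icc (t k) (t (k + 1)),
      x s = (NormedSpace.exp ((s - t k) • A (j k))).mulVec (x (t k))))

open Set NormedSpace
open scoped Matrix

section Interpolation

variable {E : Type*} [NormedAddCommGroup E] [NormedSpace ℝ E] {f f' f'' : ℝ → E} {M : ℝ}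

theorem norm_sub_sub_smul_deriv_le {a b : ℝ} (hab : a ≤ b) (hf : ∀ t, HasDerivAt f (f' t) t)
    (hf' : ∀ t, HasDerivAt f' (f'' t) t) (hM : ∀ t ∈ Icc a b, ‖f'' t‖ ≤ M) :
    ‖f b - f a - (b - a) • f' a‖ ≤ M * (b - a) ^ 2 / 2 := by
  have hf'_lip : ∀ t ∈ Icc a b, ‖f' t - f' a‖ ≤ M * (t - a) :=
    norm_image_sub_le_of_norm_deriv_le_segment' (fun t _ => (hf' t).hasDerivWithinAt)
      fun t ht => hM t (Ico_subset_Icc_self ht)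
  have hg : ∀ t, HasDerivAt (fun s => f s - f a - (s - a) • f' a) (f' t - f' a) t := fun t =>
    (((hf t).sub_const (f a)).sub
      (((hasDerivAt_id t).sub_const a).smul_const (f' a))).congr_deriv (by simp)
  have hB : ∀ t, HasDerivAt (fun s => M * (s - a) ^ 2 / 2) (M * (t - a)) t := fun t =>
    ((((hasDerivAt_id t).sub_const a).pow 2).const_mul M).div_const 2 |>.congr_deriv
      (by simp only [id]; ring)
  exact image_norm_le_of_norm_deriv_right_le_deriv_boundary
    (fun t _ => (hg t).continuousAt.continuousWithinAt) (fun t _ => (hg t).hasDerivWithinAt)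
    (by simp) hB (fun t ht => hf'_lip t (Ico_subset_Icc_self ht)) ⟨hab, le_rfl⟩

theorem norm_sub_add_smul_deriv_le {a b : ℝ} (hab : a ≤ b) (hf : ∀ t, HasDerivAt f (f' t) t)
    (hf' : ∀ t, HasDerivAt f' (f'' t) t) (hM : ∀ t ∈ Icc a b, ‖f'' t‖ ≤ M) :
    ‖f a - f b + (b - a) • f' b‖ ≤ M * (b - a) ^ 2 / 2 := by
  have hg : ∀ t, HasDerivAt (fun s => f (-s)) (-f' (-t)) t := fun t =>
    ((hf (-t)).scomp t (hasDerivAt_neg t)).congr_deriv (by simp)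
  have hg' : ∀ t, HasDerivAt (fun s => -f' (-s)) (f'' (-t)) t := fun t =>
    ((hf' (-t)).scomp t (hasDerivAt_neg t)).neg.congr_deriv (by simp)
  have := norm_sub_sub_smul_deriv_le (neg_le_neg hab) hg hg' fun t ht =>
    hM (-t) ⟨le_neg.mpr ht.2, neg_le.mpr ht.1⟩
  simpa [sub_eq_add_neg, add_comm] using this

theorem norm_sub_interpolation_le {h : ℝ} (hh : 0 < h) (hf : ∀ t, HasDerivAt f (f' t) t)
    (hf' : ∀ t, HasDerivAt f' (f'' t) t) (hM : ∀ t ∈ Icc 0 h, ‖f'' t‖ ≤ M) {τ : ℝ}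
    (hτ : τ ∈ Icc 0 h) :
    ‖f τ - ((1 - τ / h) • f 0 + (τ / h) • f h)‖ ≤ M * h ^ 2 / 8 := by
  obtain ⟨hτ0, hτh⟩ := hτ
  have hM0 : 0 ≤ M := (norm_nonneg _).trans (hM 0 ⟨le_rfl, hh.le⟩)
  have hleft := norm_sub_add_smul_deriv_le hτ0 hf hf' fun t ht => hM t ⟨ht.1, ht.2.trans hτh⟩
  have hright := norm_sub_sub_smul_deriv_le hτh hf hf' fun t ht => hM t ⟨hτ0.trans ht.1, ht.2⟩
  set ea := f 0 - f τ + (τ - 0) • f' τ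
  set eb := f h - f τ - (h - τ) • f' τ
  -- the first-order terms of the Taylor expansions at `τ` towards `0` and towards `h` cancel
  have hsplit : f τ - ((1 - τ / h) • f 0 + (τ / h) • f h) =
      -((1 - τ / h) • ea + (τ / h) • eb) := by
    simp only [ea, eb]
    match_scalars <;> field_simp <;> ring
  have hw₀ : 0 ≤ 1 - τ / h := sub_nonneg.mpr ((div_le_one hh).mpr hτh)
  have hw₁ : 0 ≤ τ / h := div_nonneg hτ0 hh.le
  calc ‖f τ - ((1 - τ / h) • f 0 + (τ / h) • f h)‖
      ≤ (1 - τ / h) * ‖ea‖ + τ / h * ‖eb‖ := by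
        rw [hsplit, norm_neg]
        refine (norm_add_le _ _).trans ?_
        rw [norm_smul_of_nonneg hw₀, norm_smul_of_nonneg hw₁]
    _ ≤ (1 - τ / h) * (M * (τ - 0) ^ 2 / 2) + τ / h * (M * (h - τ) ^ 2 / 2) := by gcongr
    _ = M * (τ * (h - τ)) / 2 := by field_simp; ring
    _ ≤ M * h ^ 2 / 8 := by nlinarith [sq_nonneg (2 * τ - h)]

end Interpolation

section BanachAlgebra

variable {𝔸 : Type*} [NormedRing 𝔸] [NormedAlgebra ℝ 𝔸] [CompleteSpace 𝔸] {B T : 𝔸} {c h : ℝ}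

theorem norm_exp_smul_le_of_norm_exp_le_one (hone : ‖(1 : 𝔸)‖ ≤ 1) (hh : 0 < h)
    (hexp : ‖exp (h • B)‖ ≤ 1) (hB : ‖B ^ 2‖ ≤ c) (hch : c * h ^ 2 < 8) {τ : ℝ}
    (hτ : τ ∈ Icc 0 h) : ‖exp (τ • B)‖ ≤ (1 - c * h ^ 2 / 8)⁻¹ := by
  set f : ℝ → 𝔸 := fun t => exp (t • B)
  have hf : ∀ t, HasDerivAt f (B * f t) t := hasDerivAt_exp_smul_const' B
  have hf' : ∀ t, HasDerivAt (fun t => B * f t) (B ^ 2 * f t) t := fun t =>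
    ((hf t).const_mul B).congr_deriv (by rw [pow_two, mul_assoc])
  obtain ⟨τ₀, hτ₀, hmax⟩ := isCompact_Icc.exists_isMaxOn (nonempty_Icc.mpr hh.le)
    (continuous_iff_continuousAt.mpr fun t => (hf t).continuousAt.norm).continuousOn
  set K := ‖f τ₀‖
  have hc : 0 ≤ c := (norm_nonneg _).trans hB
  have hf'' : ∀ t ∈ Icc 0 h, ‖B ^ 2 * f t‖ ≤ c * K := fun t ht =>
    (norm_mul_le _ _).trans (mul_le_mul hB (hmax ht) (norm_nonneg _) hc)
  have hw₀ : 0 ≤ 1 - τ₀ / h := sub_nonneg.mpr ((div_le_one hh).mpr hτ₀.2)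
  have hw₁ : 0 ≤ τ₀ / h := div_nonneg hτ₀.1 hh.le
  have hinterp : ‖(1 - τ₀ / h) • f 0 + (τ₀ / h) • f h‖ ≤ 1 := calc
    _ ≤ (1 - τ₀ / h) * ‖f 0‖ + τ₀ / h * ‖f h‖ := by
      refine (norm_add_le _ _).trans ?_
      rw [norm_smul_of_nonneg hw₀, norm_smul_of_nonneg hw₁]
    _ ≤ (1 - τ₀ / h) * 1 + τ₀ / h * 1 := by
      gcongr
      simpa [f] using hone
    _ = 1 := by ring
  have hK : K ≤ 1 + c * K * h ^ 2 / 8 := calc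
    K ≤ ‖(1 - τ₀ / h) • f 0 + (τ₀ / h) • f h‖ + ‖f τ₀ - ((1 - τ₀ / h) • f 0 + (τ₀ / h) • f h)‖ :=
      norm_le_norm_add_norm_sub' _ _
    _ ≤ 1 + c * K * h ^ 2 / 8 :=
      add_le_add hinterp (norm_sub_interpolation_le hh hf hf' hf'' hτ₀)
  have hpos : 0 < 1 - c * h ^ 2 / 8 := by linarith
  calc ‖f τ‖ ≤ K := hmax hτ
    _ ≤ (1 - c * h ^ 2 / 8)⁻¹ := by
      rw [← one_div, le_div_iff₀ hpos]
      linarith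

theorem exp_smul_eq_real_exp_smul_exp_smul_sub (τ σ : ℝ) (T : 𝔸) :
    exp (τ • T) = Real.exp (τ * σ) • exp (τ • (T - σ • 1)) := by
  let _ := NormedAlgebra.restrictScalars ℚ ℝ 𝔸
  have hsplit : τ • T = algebraMap ℝ 𝔸 (τ * σ) + τ • (T - σ • 1) := by
    rw [Algebra.algebraMap_eq_smul_one, smul_sub, smul_smul]
    abel
  rw [hsplit, exp_add_of_commute (Algebra.commutes _ _), ← algebraMap_exp_comm,
    ← Real.exp_eq_exp_ℝ, ← Algebra.smul_def]

theorem exp_add_smul (a b : ℝ) (T : 𝔸) : exp ((a + b) • T) = exp (a • T) * exp (b • T) := by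
  let _ := NormedAlgebra.restrictScalars ℚ ℝ 𝔸
  rw [add_smul, exp_add_of_commute (((Commute.refl T).smul_left a).smul_right b)]

theorem norm_exp_smul_le_of_forall_mem_Icc {K : ℝ} (hh : 0 < h) (hexp : ‖exp (h • T)‖ ≤ 1)
    (hshort : ∀ t ∈ Icc 0 h, ‖exp (t • T)‖ ≤ K) {τ : ℝ} (hτ : 0 ≤ τ) : ‖exp (τ • T)‖ ≤ K := by
  have hK : 0 ≤ K := (norm_nonneg _).trans (hshort 0 ⟨le_rfl, hh.le⟩)
  obtain ⟨q, hq⟩ := Archimedean.arch τ hh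
  induction q generalizing τ with
  | zero => exact hshort τ ⟨hτ, by linarith [zero_smul ℕ h ▸ hq]⟩
  | succ q ih =>
    by_cases hτh : τ ≤ h
    · exact hshort τ ⟨hτ, hτh⟩
    rw [succ_nsmul] at hq
    rw [← sub_add_cancel τ h, exp_add_smul]
    calc ‖exp ((τ - h) • T) * exp (h • T)‖ ≤ ‖exp ((τ - h) • T)‖ * ‖exp (h • T)‖ :=
          norm_mul_le _ _
      _ ≤ K * 1 := mul_le_mul (ih (by linarith) (by linarith)) hexp (norm_nonneg _) hK
      _ = K := mul_one K

theorem norm_exp_smul_le_of_norm_exp_le (hone : ‖(1 : 𝔸)‖ ≤ 1) (hh : 0 < h) {σ : ℝ}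
    (hσ : σ ≤ 0) (hexp : ‖exp (h • T)‖ ≤ Real.exp (σ * h)) (hT : ‖(T - σ • 1) ^ 2‖ ≤ c)
    (hch : c * h ^ 2 < 8) {τ : ℝ} (hτ : 0 ≤ τ) : ‖exp (τ • T)‖ ≤ (1 - c * h ^ 2 / 8)⁻¹ := by
  have hshift := fun t => exp_smul_eq_real_exp_smul_exp_smul_sub t σ T
  have hexpB : ‖exp (h • (T - σ • 1))‖ ≤ 1 := by
    have hB : exp (h • (T - σ • 1)) = Real.exp (-(h * σ)) • exp (h • T) := by
      rw [hshift, smul_smul, ← Real.exp_add, neg_add_cancel, Real.exp_zero, one_smul]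
    calc ‖exp (h • (T - σ • 1))‖ ≤ Real.exp (-(h * σ)) * Real.exp (σ * h) := by
          rw [hB, norm_smul_of_nonneg (Real.exp_pos _).le]
          gcongr
      _ = 1 := by rw [← Real.exp_add, mul_comm σ, neg_add_cancel, Real.exp_zero]
  refine norm_exp_smul_le_of_forall_mem_Icc hh
    (hexp.trans (Real.exp_le_one_iff.mpr (mul_nonpos_of_nonpos_of_nonneg hσ hh.le)))
    (fun t ht => ?_) hτ
  rw [hshift, norm_smul_of_nonneg (Real.exp_pos _).le]
  exact (mul_le_of_le_one_left (norm_nonneg _)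
    (Real.exp_le_one_iff.mpr (mul_nonpos_of_nonneg_of_nonpos ht.1 hσ))).trans
    (norm_exp_smul_le_of_norm_exp_le_one hone hh hexpB hT hch ht)

end BanachAlgebra

namespace IsNorm

variable {d : ℕ} {N : (Fin d → ℝ) → ℝ}

theorem map_zero (hN : IsNorm N) : N 0 = 0 := by
  simpa using hN.2.1 0 0

theorem map_neg (hN : IsNorm N) (x : Fin d → ℝ) : N (-x) = N x := by
  simpa using hN.2.1 (-1) x

-- The proof `hN` is part of the type so that the normed-space structure given by `N` can be a
-- global instance.
def Space (_ : IsNorm N) : Type := Fin d → ℝ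

instance (hN : IsNorm N) : AddCommGroup hN.Space := inferInstanceAs (AddCommGroup (Fin d → ℝ))

noncomputable instance (hN : IsNorm N) : NormedAddCommGroup hN.Space :=
  AddGroupNorm.toNormedAddCommGroup
    { toFun := N
      map_zero' := hN.map_zero
      add_le' := hN.1
      neg' := hN.map_neg
      eq_zero_of_map_eq_zero' := hN.2.2 }

noncomputable instance (hN : IsNorm N) : Module ℝ hN.Space := inferInstanceAs (Module ℝ (Fin d → ℝ))

noncomputable instance (hN : IsNorm N) : NormedSpace ℝ hN.Space where
  norm_smul_le c x := (hN.2.1 c x).le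

instance (hN : IsNorm N) : FiniteDimensional ℝ hN.Space :=
  inferInstanceAs (FiniteDimensional ℝ (Fin d → ℝ))

theorem nonneg (hN : IsNorm N) (x : Fin d → ℝ) : 0 ≤ N x := norm_nonneg (show hN.Space from x)

noncomputable def toCLM (hN : IsNorm N) : Matrix (Fin d) (Fin d) ℝ →ₐ[ℝ] (hN.Space →L[ℝ] hN.Space) :=
  (Module.End.toContinuousLinearMap hN.Space).toAlgHom.comp
    (Matrix.toLinAlgEquiv' : Matrix (Fin d) (Fin d) ℝ ≃ₐ[ℝ] Module.End ℝ hN.Space).toAlgHom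

theorem norm_toCLM_apply (hN : IsNorm N) (M : Matrix (Fin d) (Fin d) ℝ) (x : Fin d → ℝ) :
    ‖hN.toCLM M x‖ = N (M *ᵥ x) := rfl

theorem toCLM_exp (hN : IsNorm N) (M : Matrix (Fin d) (Fin d) ℝ) : hN.toCLM (exp M) = exp (hN.toCLM M) := by
  let _ : Algebra ℚ (hN.Space →L[ℝ] hN.Space) :=
    (NormedAlgebra.restrictScalars ℚ ℝ (hN.Space →L[ℝ] hN.Space)).toAlgebra
  open scoped Matrix.Norms.Operator in
  exact map_exp hN.toCLM hN.toCLM.toLinearMap.continuous_of_finiteDimensional M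

theorem opNorm_eq_norm_toCLM (hN : IsNorm N) (M : Matrix (Fin d) (Fin d) ℝ) : opNorm N M = ‖hN.toCLM M‖ := by
  rw [← ContinuousLinearMap.sSup_unitClosedBall_eq_norm, opNorm]
  congr 1
  ext r
  simp only [Set.mem_ofPred_eq, Set.mem_image, mem_closedBall_zero_iff, eq_comm]
  rfl

theorem exists_le_mul (hN : IsNorm N) {N' : (Fin d → ℝ) → ℝ} (hN' : IsNorm N') :
    ∃ C, ∀ x, N' x ≤ C * N x := by
  let T : hN.Space →L[ℝ] hN'.Space := LinearMap.toContinuousLinearMap LinearMap.id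
  exact ⟨‖T‖, T.le_opNorm⟩

theorem opNorm_nonneg (hN : IsNorm N) (M : Matrix (Fin d) (Fin d) ℝ) : 0 ≤ opNorm N M := by
  rw [hN.opNorm_eq_norm_toCLM]
  exact norm_nonneg _

theorem exists_uniform_equiv {ι : Type*} [Finite ι] {N : ι → (Fin d → ℝ) → ℝ}
    (hN : ∀ i, IsNorm (N i)) {N₀ : (Fin d → ℝ) → ℝ} (hN₀ : IsNorm N₀) :
    ∃ C, 0 ≤ C ∧ ∀ i y, N₀ y ≤ C * N i y ∧ N i y ≤ C * N₀ y := by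
  choose C₁ hC₁ using fun i => (hN i).exists_le_mul hN₀
  choose C₂ hC₂ using fun i => hN₀.exists_le_mul (hN i)
  obtain ⟨C, hC⟩ := Finite.exists_le fun i => max (C₁ i) (C₂ i)
  refine ⟨max C 0, le_max_right _ _, fun i y => ⟨(hC₁ i y).trans ?_, (hC₂ i y).trans ?_⟩⟩
  · exact mul_le_mul_of_nonneg_right ((le_max_left _ _).trans ((hC i).trans (le_max_left _ _)))
      ((hN i).nonneg y)
  · exact mul_le_mul_of_nonneg_right ((le_max_right _ _).trans ((hC i).trans (le_max_left _ _)))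
      (hN₀.nonneg y)

end IsNorm

section MatrixFlow

variable {d : ℕ} {N N' : (Fin d → ℝ) → ℝ} {A : Matrix (Fin d) (Fin d) ℝ} {c h σ : ℝ}

theorem IsNorm.mulVec_exp_smul_le (hN : IsNorm N) (hh : 0 < h) (hσ : σ ≤ 0)
    (hext : ∀ x, N (exp (h • A) *ᵥ x) ≤ Real.exp (σ * h) * N x)
    (hc : opNorm N ((A - σ • 1) ^ 2) ≤ c) (hch : c * h ^ 2 < 8) {τ : ℝ} (hτ : 0 ≤ τ)
    (x : Fin d → ℝ) : N (exp (τ • A) *ᵥ x) ≤ (1 - c * h ^ 2 / 8)⁻¹ * N x := by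
  set T := hN.toCLM A
  have hexpT : ∀ t : ℝ, exp (t • T) = hN.toCLM (exp (t • A)) := fun t => by
    rw [hN.toCLM_exp, map_smul]
  have hexp : ‖exp (h • T)‖ ≤ Real.exp (σ * h) :=
    ContinuousLinearMap.opNorm_le_bound _ (Real.exp_pos _).le fun y => by
      rw [hexpT]
      exact hext y
  have hsq : ‖(T - σ • 1) ^ 2‖ ≤ c := by
    rwa [← map_one hN.toCLM, ← map_smul, ← map_sub, ← map_pow, ← hN.opNorm_eq_norm_toCLM]
  calc N (exp (τ • A) *ᵥ x) = ‖exp (τ • T) x‖ := by rw [hexpT, norm_toCLM_apply]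
    _ ≤ ‖exp (τ • T)‖ * N x := (exp (τ • T)).le_opNorm x
    _ ≤ (1 - c * h ^ 2 / 8)⁻¹ * N x := by
      gcongr
      · exact hN.nonneg x
      · exact norm_exp_smul_le_of_norm_exp_le ContinuousLinearMap.norm_id_le hh hσ hexp hsq hch hτ

theorem mulVec_exp_smul_le_of_dwell {m K ρ : ℝ} (hK : 0 ≤ K) (hN : ∀ x, 0 ≤ N x)
    (hflow : ∀ τ : ℝ, 0 ≤ τ → ∀ x, N' (exp (τ • A) *ᵥ x) ≤ K * N' x)
    (hdwell : ∀ x, N' (exp (m • A) *ᵥ x) ≤ ρ * N x) (hKρ : K * ρ ≤ 1) {Δ : ℝ} (hΔ : m ≤ Δ)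
    (x : Fin d → ℝ) : N' (exp (Δ • A) *ᵥ x) ≤ N x := by
  have hsplit : exp (Δ • A) = exp ((Δ - m) • A) * exp (m • A) := by
    have := open scoped Matrix.Norms.Operator in exp_add_smul (Δ - m) m A
    rwa [sub_add_cancel] at this
  calc N' (exp (Δ • A) *ᵥ x) = N' (exp ((Δ - m) • A) *ᵥ (exp (m • A) *ᵥ x)) := by
        rw [hsplit, Matrix.mulVec_mulVec]
    _ ≤ K * (ρ * N x) := (hflow _ (sub_nonneg.mpr hΔ) _).trans (by gcongr; exact hdwell x)
    _ ≤ N x := by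
      rw [← mul_assoc]
      exact mul_le_of_le_one_left (hN x) hKρ

end MatrixFlow

theorem exists_mem_Ico_of_le_of_lt {α : Type*} [LinearOrder α] (t : ℕ → α) {s : α}
    (h₀ : t 0 ≤ s) {K : ℕ} (hK : s < t K) : ∃ k < K, s ∈ Ico (t k) (t (k + 1)) := by
  induction K with
  | zero => exact absurd hK (not_lt.mpr h₀)
  | succ K ih =>
    by_cases hKs : t K ≤ s
    · exact ⟨K, K.lt_succ_self, hKs, hK⟩
    · obtain ⟨k, hk, hks⟩ := ih (not_le.mp hKs)
      exact ⟨k, hk.trans K.lt_succ_self, hks⟩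

section Trajectory

variable {d n : ℕ} {A : Fin n → Matrix (Fin d) (Fin d) ℝ} {m : ℝ} {x : ℝ → Fin d → ℝ}

def IsDwellChain (A : Fin n → Matrix (Fin d) (Fin d) ℝ) (m : ℝ) (x : ℝ → Fin d → ℝ)
    (t : ℕ → ℝ) (j : ℕ → Fin n) (k : ℕ) : Prop :=
  ∀ i < k, m ≤ t (i + 1) - t i ∧ j (i + 1) ≠ j i ∧
    x (t (i + 1)) = exp ((t (i + 1) - t i) • A (j i)) *ᵥ x (t i)

theorem IsDwellTrajectory.exists_chain (hm : 0 ≤ m) (hx : IsDwellTrajectory A m x) {s : ℝ}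
    (hs : 0 ≤ s) : ∃ t j k, t 0 = 0 ∧ IsDwellChain A m x t j k ∧ t k ≤ s ∧
      x s = exp ((s - t k) • A (j k)) *ᵥ x (t k) := by
  rcases hx with ⟨N, t, j, ht₀, hgap, hj, hseg, hlast⟩ | ⟨t, j, ht₀, hgap, htop, hj, hseg⟩
  · have hchain : ∀ k ≤ N, IsDwellChain A m x t j k := fun k hk i hi =>
      ⟨hgap i (by omega), hj i (by omega),
        hseg i (by omega) _ ⟨by linarith [hgap i (by omega)], le_rfl⟩⟩
    by_cases hsN : t N ≤ s
    · exact ⟨t, j, N, ht₀, hchain N le_rfl, hsN, hlast s hsN⟩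
    · obtain ⟨k, hk, hks⟩ := exists_mem_Ico_of_le_of_lt t (ht₀ ▸ hs) (not_le.mp hsN)
      exact ⟨t, j, k, ht₀, hchain k hk.le, hks.1, hseg k hk s (Ico_subset_Icc_self hks)⟩
  · obtain ⟨K, hK⟩ := (htop.eventually_gt_atTop s).exists
    obtain ⟨k, -, hks⟩ := exists_mem_Ico_of_le_of_lt t (ht₀ ▸ hs) hK
    exact ⟨t, j, k, ht₀, fun i _ => ⟨hgap i, hj i, hseg i _ ⟨by linarith [hgap i], le_rfl⟩⟩,
      hks.1, hseg k s (Ico_subset_Icc_self hks)⟩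

variable {N : Fin n → (Fin d → ℝ) → ℝ} {K : ℝ}

theorem IsDwellChain.le_of_flow {t : ℕ → ℝ} {j : ℕ → Fin n} (hm : 0 ≤ m)
    (hflow : ∀ i (τ : ℝ), 0 ≤ τ → ∀ y, N i (exp (τ • A i) *ᵥ y) ≤ K * N i y)
    (hswitch : ∀ i i', i ≠ i' → ∀ Δ, m ≤ Δ → ∀ y, N i' (exp (Δ • A i') *ᵥ y) ≤ N i y) :
    ∀ {i : ℕ}, IsDwellChain A m x t j (i + 1) →
      N (j i) (x (t (i + 1))) ≤ K * N (j 0) (x (t 0))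
  | 0, hchain => by
    obtain ⟨hgap, -, hx⟩ := hchain 0 one_pos
    rw [hx]
    exact hflow _ _ (hm.trans hgap) _
  | i + 1, hchain => by
    obtain ⟨hgap, -, hx⟩ := hchain (i + 1) (by omega)
    obtain ⟨-, hj, -⟩ := hchain i (by omega)
    rw [hx]
    exact (hswitch _ _ hj.symm _ hgap _).trans
      (le_of_flow hm hflow hswitch fun i' hi' => hchain i' (by omega))

theorem IsDwellTrajectory.exists_bound (hm : 0 ≤ m) (hx : IsDwellTrajectory A m x)
    {Nn : (Fin d → ℝ) → ℝ} {C : ℝ} (hK : 0 ≤ K) (hC : 0 ≤ C)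
    (hflow : ∀ i (τ : ℝ), 0 ≤ τ → ∀ y, N i (exp (τ • A i) *ᵥ y) ≤ K * N i y)
    (hswitch : ∀ i i', i ≠ i' → ∀ Δ, m ≤ Δ → ∀ y, N i' (exp (Δ • A i') *ᵥ y) ≤ N i y)
    (hequiv : ∀ i y, Nn y ≤ C * N i y ∧ N i y ≤ C * Nn y) :
    ∃ B, ∀ s, 0 ≤ s → Nn (x s) ≤ B := by
  refine ⟨C * (K * max (C * Nn (x 0)) (C ^ 3 * K * Nn (x 0))), fun s hs => ?_⟩
  obtain ⟨t, j, k, ht₀, hchain, hks, hxs⟩ := hx.exists_chain hm hs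
  have hstart : N (j k) (x (t k)) ≤ max (C * Nn (x 0)) (C ^ 3 * K * Nn (x 0)) := by
    cases k with
    | zero => exact le_max_of_le_left (ht₀ ▸ (hequiv _ _).2)
    | succ i =>
      refine le_max_of_le_right ?_
      calc N (j (i + 1)) (x (t (i + 1))) ≤ C * Nn (x (t (i + 1))) := (hequiv _ _).2
        _ ≤ C * (C * N (j i) (x (t (i + 1)))) := by gcongr; exact (hequiv _ _).1
        _ ≤ C * (C * (K * N (j 0) (x (t 0)))) := by
          gcongr; exact hchain.le_of_flow hm hflow hswitch
        _ ≤ C * (C * (K * (C * Nn (x 0)))) := by rw [ht₀]; gcongr; exact (hequiv _ _).2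
        _ = C ^ 3 * K * Nn (x 0) := by ring
  calc Nn (x s) ≤ C * N (j k) (x s) := (hequiv _ _).1
    _ ≤ C * (K * N (j k) (x (t k))) := by
      rw [hxs]; gcongr; exact hflow _ _ (sub_nonneg.mpr hks) _
    _ ≤ C * (K * max (C * Nn (x 0)) (C ^ 3 * K * Nn (x 0))) := by gcongr

end Trajectory

theorem stability_of_discretization_general {d n : ℕ}
    (A : Fin n → Matrix (Fin d) (Fin d) ℝ)
    (m h σh : ℝ) (hm : 0 < m) (hh : 0 < h)
    (Nm : Fin n → (Fin d → ℝ) → ℝ) (hNm : ∀ j, IsNorm (Nm j))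
    (hext₁ : ∀ (j : Fin n) (x : Fin d → ℝ),
      Nm j ((NormedSpace.exp (h • A j)).mulVec x) ≤ Real.exp (σh * h) * Nm j x)
    (hext₂ : ∀ (i j : Fin n), i ≠ j → ∀ x : Fin d → ℝ,
      Nm j ((NormedSpace.exp (m • A j)).mulVec x) ≤ Real.exp (σh * m) * Nm i x)
    (c : ℝ)
    (hc : c = ⨆ j : Fin n, opNorm (Nm j) ((A j - σh • (1 : Matrix (Fin d) (Fin d) ℝ)) ^ 2))
    (hch : c * h ^ 2 < 8)
    (hstab : Real.exp (σh * m) ≤ 1 - c * h ^ 2 / 8) :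
    ∀ x : ℝ → (Fin d → ℝ), IsDwellTrajectory A m x →
      ∀ Nn : (Fin d → ℝ) → ℝ, IsNorm Nn →
        ∃ C : ℝ, ∀ s : ℝ, 0 ≤ s → Nn (x s) ≤ C := by
  intro x hx Nn hNn
  have hc₀ : 0 ≤ c := hc ▸ Real.iSup_nonneg fun j => (hNm j).opNorm_nonneg _
  have hcj : ∀ j, opNorm (Nm j) ((A j - σh • 1) ^ 2) ≤ c := fun j =>
    hc ▸ le_ciSup (f := fun j => opNorm (Nm j) ((A j - σh • 1) ^ 2))
      (Set.finite_range _).bddAbove j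
  have hpos : 0 < 1 - c * h ^ 2 / 8 := by linarith
  have hσ : σh ≤ 0 := nonpos_of_mul_nonpos_left
    (Real.exp_le_one_iff.mp (hstab.trans (by nlinarith))) hm
  have hflow := fun j τ (hτ : 0 ≤ τ) y =>
    (hNm j).mulVec_exp_smul_le hh hσ (hext₁ j) (hcj j) hch hτ y
  have hK₀ : 0 ≤ (1 - c * h ^ 2 / 8)⁻¹ := inv_nonneg.mpr hpos.le
  have hswitch := fun i j (hij : i ≠ j) Δ (hΔ : m ≤ Δ) y =>
    mulVec_exp_smul_le_of_dwell hK₀ (hNm i).nonneg (hflow j) (hext₂ i j hij)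
      (inv_mul_le_one_of_le₀ hstab hpos.le) hΔ y
  obtain ⟨C, hC₀, hC⟩ := IsNorm.exists_uniform_equiv hNm hNn
  exact hx.exists_bound hm.le hK₀ hC₀ hflow hswitch hC

/-- **Sufficient stability condition (Corollary 2).**  If the norms `Nm j` form an
extremal multinorm datum for the `h`-discretization with value `σh`,
`c = max_j ‖(A_j − σh·I)²‖_j` satisfies `c·h² < 8`, and moreover
`e^{σh·m} ≤ 1 − c·h²/8`, then every trajectory of the switched system with dwell time at
least `m` is bounded in any norm on `ℝ^d`. -/
theorem stability_of_discretization {d n : ℕ} (hn : 0 < n)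
    (A : Fin n → Matrix (Fin d) (Fin d) ℝ)
    (m h σh : ℝ) (hm : 0 < m) (hh : 0 < h) (hhm : h ≤ m)
    (Nm : Fin n → (Fin d → ℝ) → ℝ) (hNm : ∀ j, IsNorm (Nm j))
    (hext₁ : ∀ (j : Fin n) (x : Fin d → ℝ),
      Nm j ((NormedSpace.exp (h • A j)).mulVec x) ≤ Real.exp (σh * h) * Nm j x)
    (hext₂ : ∀ (i j : Fin n), i ≠ j → ∀ x : Fin d → ℝ,
      Nm j ((NormedSpace.exp (m • A j)).mulVec x) ≤ Real.exp (σh * m) * Nm i x)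
    (c : ℝ)
    (hc : c = ⨆ j : Fin n, opNorm (Nm j) ((A j - σh • (1 : Matrix (Fin d) (Fin d) ℝ)) ^ 2))
    (hch : c * h ^ 2 < 8)
    (hstab : Real.exp (σh * m) ≤ 1 - c * h ^ 2 / 8) :
    ∀ x : ℝ → (Fin d → ℝ), IsDwellTrajectory A m x →
      ∀ Nn : (Fin d → ℝ) → ℝ, IsNorm Nn →
        ∃ C : ℝ, ∀ s : ℝ, 0 ≤ s → Nn (x s) ≤ C :=
  stability_of_discretization_general A m h σh hm hh Nm hNm hext₁ hext₂ c hc hch hstab
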